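/- arXiv:1206.3038 — 2 statements merged into one kernel-verified Lean document; each statement's English description precedes it below -/
import Mathlib

section
/- For k ≥ 1 the dual of the quaternary simplex code of type α satisfies r_L((S_k^α)⊥) = 1 and r_E((S_k^α)⊥) ≤ 4; for k ≥ 2 the dual of the quaternary simplex code of type β satisfies r_L((S_k^β)⊥) = 2 and r_E((S_k^β)⊥) ≤ 4. -/
/-- The Lee weight on `ZMod 4`: `w_L(0)=0, w_L(1)=1, w_L(2)=2, w_L(3)=1`. -/
def leeWt (x : ZMod 4) : ℕ := min x.val (4 - x.val)

/-- The Euclidean weight on `ZMod 4`: `w_E(0)=0, w_E(1)=1, w_E(2)=4, w_E(3)=1`. -/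
def euclWt (x : ZMod 4) : ℕ := (min x.val (4 - x.val)) ^ 2

/-- The Lee distance between two vectors over `ZMod 4`. -/
def dLee {ι : Type*} [Fintype ι] (x y : ι → ZMod 4) : ℕ := ∑ i, leeWt (x i - y i)

/-- The Euclidean distance between two vectors over `ZMod 4`. -/
def dEucl {ι : Type*} [Fintype ι] (x y : ι → ZMod 4) : ℕ := ∑ i, euclWt (x i - y i)

/-- The covering radius of a code over `ZMod 4` with respect to the Lee distance. -/
noncomputable def covRadLee {ι : Type*} [Fintype ι] (C : Set (ι → ZMod 4)) : ℕ :=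
  sSup (Set.range fun u : ι → ZMod 4 => sInf (dLee u '' C))

/-- The covering radius of a code over `ZMod 4` with respect to the Euclidean distance. -/
noncomputable def covRadEucl {ι : Type*} [Fintype ι] (C : Set (ι → ZMod 4)) : ℕ :=
  sSup (Set.range fun u : ι → ZMod 4 => sInf (dEucl u '' C))

/-- The quaternary simplex code of type α: the `ZMod 4`-span of the rows of the
`k × 4^k` matrix whose columns are exactly all elements of `(ZMod 4)^k`, each once.
Here codewords are indexed by the columns, i.e. by the elements of `(ZMod 4)^k`. -/
def simplexAlpha (k : ℕ) : Set ((Fin k → ZMod 4) → ZMod 4) :=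
  Set.range fun a : Fin k → ZMod 4 => fun v : Fin k → ZMod 4 => ∑ i, a i * v i

/-- The length `2^(k-1) * (2^k - 1)` of the type β simplex code. -/
def lenB (k : ℕ) : ℕ := 2 ^ (k - 1) * (2 ^ k - 1)

/-- Entry `(i, j)` of the generator matrix `G_k^α` of the type α simplex code:
column `j` (for `j < 4^k`) is the base-4 digit expansion of `j`, so the columns are
exactly all elements of `(ZMod 4)^k`, each occurring once. -/
def galphaEnt (i j : ℕ) : ZMod 4 := ((j / 4 ^ i) % 4 : ℕ)

/-- Entry `(i, j)` of the recursively defined generator matrix `G_k^β`: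
`G_2^β` has rows `(1,1,1,1,0,2)` and `(0,1,2,3,1,1)`; for `k > 2`, the first row of
`G_k^β` consists of `4^(k-1)` ones, then `lenB (k-1)` zeros, then `lenB (k-1)` twos,
and the remaining rows are `[G_(k-1)^α | G_(k-1)^β | G_(k-1)^β]`. -/
def gbetaEnt : ℕ → ℕ → ℕ → ZMod 4
  | 0, _, _ => 0
  | 1, _, _ => 0
  | 2, i, j =>
      if i = 0 then (if j < 4 then 1 else if j = 4 then 0 else 2)
      else (if j = 0 then 0 else if j = 1 then 1 else if j = 2 then 2
            else if j = 3 then 3 else 1)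
  | (k + 3), i, j =>
      if i = 0 then
        (if j < 4 ^ (k + 2) then 1
         else if j < 4 ^ (k + 2) + 2 ^ (k + 1) * (2 ^ (k + 2) - 1) then 0 else 2)
      else if j < 4 ^ (k + 2) then galphaEnt (i - 1) j
      else if j < 4 ^ (k + 2) + 2 ^ (k + 1) * (2 ^ (k + 2) - 1) then
        gbetaEnt (k + 2) (i - 1) (j - 4 ^ (k + 2))
      else gbetaEnt (k + 2) (i - 1) (j - 4 ^ (k + 2) - 2 ^ (k + 1) * (2 ^ (k + 2) - 1))

/-- The quaternary simplex code of type β: the `ZMod 4`-span of the rows of `G_k^β`. -/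
def simplexBeta (k : ℕ) : Set (Fin (lenB k) → ZMod 4) :=
  Set.range fun a : Fin k → ZMod 4 => fun j : Fin (lenB k) => ∑ i : Fin k, a i * gbetaEnt k i j

/-- The dual code of a code over `ZMod 4`, with respect to the standard inner product. -/
def dualCode {ι : Type*} [Fintype ι] (C : Set (ι → ZMod 4)) : Set (ι → ZMod 4) :=
  {x | ∀ c ∈ C, ∑ i, x i * c i = 0}

/-! Both dual codes are kernels of generator matrices `G`, so `u` lies within Lee distance `r`
of the dual code iff some error `e` of Lee weight at most `r` has the syndrome of `u`,
`G *ᵥ e = G *ᵥ u`. For type α every syndrome is a column of `G`, so weight one always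
suffices, and a nonzero syndrome forces weight one. The columns of `G_k^β` include `(1, v)` for
every `v`; a syndrome `(ε, t)` equals `a • (1, a t) + (ε - a) • (1, 0)` for a unit `a` chosen
so that `ε - a` is zero or a unit, which costs Lee weight at most two, while `(2, 0, …, 0)` is
no unit multiple of a column and so needs weight two. The Euclidean bounds follow from
`w_E ≤ 2 w_L` on `ZMod 4`. -/

open Matrix

section CoveringRadius

variable {α : Type*} {d : α → α → ℕ} {C : Set α} {r : ℕ}

lemma sSup_range_sInf_image_le (h : ∀ u, ∃ c ∈ C, d u c ≤ r) :
    sSup (Set.range fun u => sInf (d u '' C)) ≤ r :=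
  csSup_le' <| Set.forall_mem_range.2 fun u => by
    obtain ⟨c, hc, hcu⟩ := h u
    exact (Nat.sInf_le (Set.mem_image_of_mem _ hc)).trans hcu

lemma exists_le_sSup_range_sInf_image [Finite α] (hC : C.Nonempty) (u : α) :
    ∃ c ∈ C, d u c ≤ sSup (Set.range fun u => sInf (d u '' C)) := by
  obtain ⟨c, hc, hcu⟩ := Nat.sInf_mem (hC.image (d u))
  refine ⟨c, hc, ?_⟩
  rw [hcu]
  exact le_csSup (Set.finite_range _).bddAbove ⟨u, rfl⟩

end CoveringRadius

section LeeWeight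

variable {ι : Type*} [Fintype ι]

def leeWeight (e : ι → ZMod 4) : ℕ := ∑ i, leeWt (e i)

lemma dLee_eq_leeWeight_sub (x y : ι → ZMod 4) : dLee x y = leeWeight (x - y) := rfl

lemma one_le_leeWt {x : ZMod 4} (hx : x ≠ 0) : 1 ≤ leeWt x := by
  revert x; decide

lemma leeWt_add_le (x y : ZMod 4) : leeWt (x + y) ≤ leeWt x + leeWt y := by
  revert x y; decide

lemma euclWt_le_two_mul_leeWt (x : ZMod 4) : euclWt x ≤ 2 * leeWt x := by
  revert x; decide

lemma dEucl_le_two_mul_dLee (x y : ι → ZMod 4) : dEucl x y ≤ 2 * dLee x y := by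
  rw [dLee, Finset.mul_sum]
  exact Finset.sum_le_sum fun i _ => euclWt_le_two_mul_leeWt _

lemma leeWt_le_leeWeight (e : ι → ZMod 4) (j : ι) : leeWt (e j) ≤ leeWeight e :=
  Finset.single_le_sum (fun i _ => Nat.zero_le (leeWt (e i))) (Finset.mem_univ j)

lemma one_le_leeWeight {e : ι → ZMod 4} (he : e ≠ 0) : 1 ≤ leeWeight e := by
  obtain ⟨j, hj⟩ := Function.ne_iff.1 he
  exact (one_le_leeWt hj).trans (leeWt_le_leeWeight e j)

lemma leeWeight_add_le (e f : ι → ZMod 4) : leeWeight (e + f) ≤ leeWeight e + leeWeight f := by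
  rw [leeWeight, leeWeight, leeWeight, ← Finset.sum_add_distrib]
  exact Finset.sum_le_sum fun i _ => leeWt_add_le _ _

variable [DecidableEq ι]

lemma leeWeight_single (j : ι) (a : ZMod 4) : leeWeight (Pi.single j a) = leeWt a := by
  rw [leeWeight, Finset.sum_eq_single j (fun i _ hi => by rw [Pi.single_eq_of_ne hi]; rfl)
    (fun h => absurd (Finset.mem_univ j) h), Pi.single_eq_same]

lemma eq_single_of_leeWeight_le_one {e : ι → ZMod 4} (h : leeWeight e ≤ 1) {j : ι}
    (hj : e j ≠ 0) : e = Pi.single j (e j) := by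
  funext i
  by_cases hij : i = j
  · subst hij; simp
  rw [Pi.single_eq_of_ne hij]
  by_contra hi
  have hpair : leeWt (e i) + leeWt (e j) ≤ leeWeight e :=
    Finset.add_le_sum (f := fun i => leeWt (e i)) (fun i _ => Nat.zero_le _) (Finset.mem_univ i)
      (Finset.mem_univ j) hij
  have hi' := one_le_leeWt hi
  have hj' := one_le_leeWt hj
  omega

end LeeWeight

section CoveringRadiusOfDual

variable {ι : Type*} [Fintype ι]

lemma exists_dLee_le_covRadLee {C : Set (ι → ZMod 4)} (hC : C.Nonempty) (u : ι → ZMod 4) :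
    ∃ c ∈ C, dLee u c ≤ covRadLee C :=
  exists_le_sSup_range_sInf_image hC u

lemma covRadEucl_le_two_mul_covRadLee {C : Set (ι → ZMod 4)} (hC : C.Nonempty) :
    covRadEucl C ≤ 2 * covRadLee C :=
  sSup_range_sInf_image_le fun u =>
    let ⟨c, hc, hcu⟩ := exists_dLee_le_covRadLee hC u
    ⟨c, hc, (dEucl_le_two_mul_dLee u c).trans (by omega)⟩

lemma dualCode_nonempty (C : Set (ι → ZMod 4)) : (dualCode C).Nonempty :=
  ⟨0, fun c _ => by simp⟩

variable {κ : Type*} (G : Matrix κ ι (ZMod 4))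

lemma mulVec_single_eq_smul_col [DecidableEq ι] (j : ι) (a : ZMod 4) :
    G *ᵥ Pi.single j a = a • G.col j := by
  ext i; simp [mul_comm]

lemma two_le_leeWeight_of_mulVec_eq {s : κ → ZMod 4} (hs₀ : s ≠ 0)
    (hs : ∀ j δ, leeWt δ = 1 → δ • G.col j ≠ s) {e : ι → ZMod 4} (he : G *ᵥ e = s) :
    2 ≤ leeWeight e := by
  classical
  by_contra! hw
  have he₀ : e ≠ 0 := by rintro rfl; exact hs₀ (by simp [← he])
  obtain ⟨j, hj⟩ := Function.ne_iff.1 he₀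
  have hδ : leeWt (e j) = 1 := le_antisymm ((leeWt_le_leeWeight e j).trans (by omega))
    (one_le_leeWt hj)
  rw [eq_single_of_leeWeight_le_one (by omega) hj, mulVec_single_eq_smul_col] at he
  exact hs j _ hδ he

variable [Fintype κ]

lemma mem_dualCode_range_vecMul {x : ι → ZMod 4} :
    x ∈ dualCode (Set.range (· ᵥ* G)) ↔ G *ᵥ x = 0 := by
  have h (a : κ → ZMod 4) : x ⬝ᵥ (a ᵥ* G) = (G *ᵥ x) ⬝ᵥ a := by
    rw [dotProduct_comm, ← dotProduct_mulVec, dotProduct_comm]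
  change (∀ c ∈ Set.range (· ᵥ* G), x ⬝ᵥ c = 0) ↔ _
  simp only [Set.forall_mem_range, h]
  exact dotProduct_eq_zero_iff

lemma covRadLee_dualCode_le {r : ℕ}
    (h : ∀ u, ∃ e, G *ᵥ e = G *ᵥ u ∧ leeWeight e ≤ r) :
    covRadLee (dualCode (Set.range (· ᵥ* G))) ≤ r :=
  sSup_range_sInf_image_le fun u =>
    let ⟨e, he, hw⟩ := h u
    ⟨u - e, (mem_dualCode_range_vecMul G).2 (by rw [mulVec_sub, he, sub_self]),
      by rwa [dLee_eq_leeWeight_sub, sub_sub_cancel]⟩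

lemma le_covRadLee_dualCode {r : ℕ} (u : ι → ZMod 4)
    (h : ∀ e, G *ᵥ e = G *ᵥ u → r ≤ leeWeight e) :
    r ≤ covRadLee (dualCode (Set.range (· ᵥ* G))) := by
  obtain ⟨c, hc, hcu⟩ := exists_dLee_le_covRadLee (dualCode_nonempty _) u
  refine le_trans ?_ hcu
  rw [dLee_eq_leeWeight_sub]
  exact h _ (by rw [mulVec_sub, (mem_dualCode_range_vecMul G).1 hc, sub_zero])

lemma one_le_covRadLee_dualCode (hG : G ≠ 0) :
    1 ≤ covRadLee (dualCode (Set.range (· ᵥ* G))) := by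
  classical
  obtain ⟨i, j, hij⟩ : ∃ i j, G i j ≠ 0 := by
    by_contra! h
    exact hG (Matrix.ext h)
  refine le_covRadLee_dualCode G (Pi.single j 1) fun e he => one_le_leeWeight ?_
  rintro rfl
  rw [mulVec_zero, mulVec_single_one] at he
  exact hij (congrFun he i).symm

end CoveringRadiusOfDual

section Alpha

def alphaGen (k : ℕ) : Matrix (Fin k) (Fin k → ZMod 4) (ZMod 4) := Matrix.of fun i v => v i

lemma simplexAlpha_eq_range_vecMul (k : ℕ) :
    simplexAlpha k = Set.range (· ᵥ* alphaGen k) := rfl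

lemma covRadLee_dualCode_simplexAlpha {k : ℕ} (hk : 1 ≤ k) :
    covRadLee (dualCode (simplexAlpha k)) = 1 := by
  rw [simplexAlpha_eq_range_vecMul]
  refine le_antisymm
    (covRadLee_dualCode_le _ fun u => ⟨Pi.single (alphaGen k *ᵥ u) 1, ?_, ?_⟩)
    (one_le_covRadLee_dualCode _ fun h => ?_)
  · exact mulVec_single_one _ _
  · rw [leeWeight_single]; rfl
  · exact (by decide : (1 : ZMod 4) ≠ 0) (congrFun (congrFun h ⟨0, hk⟩) fun _ => 1)

end Alpha

section BetaColumns

lemma galphaEnt_finFunctionFinEquiv {n : ℕ} (v : Fin n → ZMod 4) (i : Fin n) :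
    galphaEnt i (finFunctionFinEquiv v) = v i := by
  -- `ZMod 4` is definitionally `Fin 4`, so `v` is a digit vector
  have h : finFunctionFinEquiv.symm (finFunctionFinEquiv v) i = v i :=
    congrFun (finFunctionFinEquiv.symm_apply_apply v) i
  change (((finFunctionFinEquiv.symm (finFunctionFinEquiv v) i : Fin 4) : ℕ) : ZMod 4) = v i
  rw [h]
  exact ZMod.natCast_zmod_val (v i)

lemma lenB_add_three (n : ℕ) : lenB (n + 3) = 4 ^ (n + 2) + 2 * lenB (n + 2) := by
  show 2 ^ (n + 2) * (2 ^ (n + 3) - 1) = 4 ^ (n + 2) + 2 * (2 ^ (n + 1) * (2 ^ (n + 2) - 1))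
  rw [show 4 ^ (n + 2) = 2 ^ (n + 1) * 2 * (2 ^ (n + 1) * 2) by
    rw [show 4 = 2 ^ 2 by rfl, ← pow_mul]; ring,
    show 2 ^ (n + 3) = 2 ^ (n + 1) * 2 * 2 by ring, show 2 ^ (n + 2) = 2 ^ (n + 1) * 2 by ring]
  have h : 1 ≤ 2 ^ (n + 1) := Nat.one_le_two_pow
  generalize 2 ^ (n + 1) = a at h ⊢
  zify [show 1 ≤ a * 2 by omega, show 1 ≤ a * 2 * 2 by omega]
  ring

lemma four_pow_le_lenB_succ (n : ℕ) : 4 ^ n ≤ lenB (n + 1) := by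
  have h : 1 ≤ 2 ^ n := Nat.one_le_two_pow
  rw [lenB, Nat.add_sub_cancel, show 4 ^ n = 2 ^ n * 2 ^ n by rw [← mul_pow]; rfl, pow_succ]
  exact Nat.mul_le_mul_left _ (by omega)

lemma lenB_add_two (n : ℕ) : lenB (n + 2) = 2 ^ (n + 1) * (2 ^ (n + 2) - 1) := rfl

lemma gbetaEnt_zero_of_lt {n j : ℕ} (hn : 1 ≤ n) (hj : j < 4 ^ n) :
    gbetaEnt (n + 1) 0 j = 1 := by
  obtain ⟨m, rfl⟩ : ∃ m, n = m + 1 := ⟨n - 1, by omega⟩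
  cases m with
  | zero => simp [gbetaEnt, show j < 4 by simpa using hj]
  | succ m => simp [gbetaEnt, hj]

lemma gbetaEnt_succ_of_lt {n i j : ℕ} (hn : 1 ≤ n) (hi : i < n) (hj : j < 4 ^ n) :
    gbetaEnt (n + 1) (i + 1) j = galphaEnt i j := by
  obtain ⟨m, rfl⟩ : ∃ m, n = m + 1 := ⟨n - 1, by omega⟩
  cases m with
  | zero =>
    obtain rfl : i = 0 := by omega
    interval_cases j <;> rfl
  | succ m => simp [gbetaEnt, hj]

variable (n : ℕ) {i j : ℕ}

lemma gbetaEnt_zero_four_pow_add (hj : j < lenB (n + 2)) :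
    gbetaEnt (n + 3) 0 (4 ^ (n + 2) + j) = 0 := by
  simp [gbetaEnt, ← lenB_add_two, hj]

lemma gbetaEnt_succ_four_pow_add (hj : j < lenB (n + 2)) :
    gbetaEnt (n + 3) (i + 1) (4 ^ (n + 2) + j) = gbetaEnt (n + 2) i j := by
  simp [gbetaEnt, ← lenB_add_two, hj]

lemma gbetaEnt_zero_four_pow_add_lenB_add :
    gbetaEnt (n + 3) 0 (4 ^ (n + 2) + lenB (n + 2) + j) = 2 := by
  simp [gbetaEnt, ← lenB_add_two, add_assoc]

lemma gbetaEnt_succ_four_pow_add_lenB_add :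
    gbetaEnt (n + 3) (i + 1) (4 ^ (n + 2) + lenB (n + 2) + j) = gbetaEnt (n + 2) i j := by
  simp [gbetaEnt, ← lenB_add_two, add_assoc]

lemma lt_lenB_add_three_cases (hj : j < lenB (n + 3)) :
    j < 4 ^ (n + 2) ∨ (∃ j' < lenB (n + 2), j = 4 ^ (n + 2) + j') ∨
      ∃ j' < lenB (n + 2), j = 4 ^ (n + 2) + lenB (n + 2) + j' := by
  rw [lenB_add_three] at hj
  by_cases h₁ : j < 4 ^ (n + 2)
  · exact Or.inl h₁
  by_cases h₂ : j < 4 ^ (n + 2) + lenB (n + 2)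
  · exact Or.inr (Or.inl ⟨j - 4 ^ (n + 2), by omega, by omega⟩)
  · exact Or.inr (Or.inr ⟨j - 4 ^ (n + 2) - lenB (n + 2), by omega, by omega⟩)

lemma exists_gbetaEnt_ne_zero (hj : j < lenB (n + 2)) :
    ∃ i < n + 2, gbetaEnt (n + 2) i j ≠ 0 := by
  induction n generalizing j with
  | zero =>
    change j < 6 at hj
    interval_cases j <;> decide
  | succ n ih =>
    rcases lt_lenB_add_three_cases n hj with hj | ⟨j, hj', rfl⟩ | ⟨j, hj', rfl⟩
    · exact ⟨0, by omega, by rw [gbetaEnt_zero_of_lt (by omega) hj]; decide⟩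
    · obtain ⟨i, hi, hne⟩ := ih hj'
      exact ⟨i + 1, by omega, by rwa [gbetaEnt_succ_four_pow_add n hj']⟩
    · obtain ⟨i, hi, hne⟩ := ih hj'
      exact ⟨i + 1, by omega, by rwa [gbetaEnt_succ_four_pow_add_lenB_add]⟩

lemma exists_gbetaEnt_succ_ne_zero (hj : j < lenB (n + 2)) (h₂ : gbetaEnt (n + 2) 0 j = 2) :
    ∃ i < n + 1, gbetaEnt (n + 2) (i + 1) j ≠ 0 := by
  cases n with
  | zero =>
    change j < 6 at hj
    revert h₂
    interval_cases j <;> decide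
  | succ n =>
    rcases lt_lenB_add_three_cases n hj with hj | ⟨j, hj', rfl⟩ | ⟨j, hj', rfl⟩
    · rw [gbetaEnt_zero_of_lt (by omega) hj] at h₂
      exact absurd h₂ (by decide)
    · rw [gbetaEnt_zero_four_pow_add n hj'] at h₂
      exact absurd h₂ (by decide)
    · obtain ⟨i, hi, hne⟩ := exists_gbetaEnt_ne_zero n hj'
      exact ⟨i, by omega, by rwa [gbetaEnt_succ_four_pow_add_lenB_add]⟩

end BetaColumns

section Beta

def betaGen (k : ℕ) : Matrix (Fin k) (Fin (lenB k)) (ZMod 4) :=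
  Matrix.of fun i j => gbetaEnt k i j

lemma simplexBeta_eq_range_vecMul (k : ℕ) : simplexBeta k = Set.range (· ᵥ* betaGen k) := rfl

variable {n : ℕ}

lemma exists_betaGen_col_eq_cons_one (hn : 1 ≤ n) (v : Fin n → ZMod 4) :
    ∃ j, (betaGen (n + 1)).col j = Fin.cons 1 v := by
  let j : Fin (4 ^ n) := finFunctionFinEquiv v
  refine ⟨⟨j, j.2.trans_le (four_pow_le_lenB_succ n)⟩, funext fun i => ?_⟩
  cases i using Fin.cases with
  | zero => exact gbetaEnt_zero_of_lt hn j.2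
  | succ i =>
    exact (gbetaEnt_succ_of_lt hn i.2 j.2).trans (galphaEnt_finFunctionFinEquiv v i)

lemma betaGen_col_ne_cons_two_zero (hn : 1 ≤ n) (j : Fin (lenB (n + 1))) :
    (betaGen (n + 1)).col j ≠ Fin.cons 2 0 := by
  obtain ⟨m, rfl⟩ : ∃ m, n = m + 1 := ⟨n - 1, by omega⟩
  intro h
  obtain ⟨i, hi, hne⟩ := exists_gbetaEnt_succ_ne_zero m j.2 (congrFun h 0)
  exact hne (congrFun h (Fin.succ ⟨i, hi⟩))

lemma exists_leeWeight_le_two_mulVec_betaGen_eq (hn : 1 ≤ n) (s : Fin (n + 1) → ZMod 4) :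
    ∃ e, betaGen (n + 1) *ᵥ e = s ∧ leeWeight e ≤ 2 := by
  obtain ⟨a, ha, hwt⟩ : ∃ a : ZMod 4, a * a = 1 ∧ leeWt a + leeWt (s 0 - a) ≤ 2 := by
    generalize s 0 = ε; revert ε; decide
  obtain ⟨j, hj⟩ := exists_betaGen_col_eq_cons_one hn (a • Fin.tail s)
  obtain ⟨j₀, hj₀⟩ := exists_betaGen_col_eq_cons_one hn 0
  refine ⟨Pi.single j a + Pi.single j₀ (s 0 - a), ?_, ?_⟩
  · rw [mulVec_add, mulVec_single_eq_smul_col, mulVec_single_eq_smul_col, hj, hj₀]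
    ext i
    cases i using Fin.cases with
    | zero => simp
    | succ i => simp [Fin.tail, ← mul_assoc, ha]
  · exact (leeWeight_add_le _ _).trans (by rwa [leeWeight_single, leeWeight_single])

lemma two_le_covRadLee_dualCode_betaGen (hn : 1 ≤ n) :
    2 ≤ covRadLee (dualCode (Set.range (· ᵥ* betaGen (n + 1)))) := by
  obtain ⟨j₀, hj₀⟩ := exists_betaGen_col_eq_cons_one hn 0
  have hu : betaGen (n + 1) *ᵥ Pi.single j₀ 2 = Fin.cons 2 0 := by
    rw [mulVec_single_eq_smul_col, hj₀]
    ext i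
    cases i using Fin.cases <;> simp
  refine le_covRadLee_dualCode _ _ fun e he => two_le_leeWeight_of_mulVec_eq _ ?_ ?_ (he.trans hu)
  · exact fun h => (by decide : (2 : ZMod 4) ≠ 0) (congrFun h 0)
  · intro j δ hδ hcol
    have hunit : ∀ δ : ZMod 4, leeWt δ = 1 → δ * δ = 1 ∧ δ * 2 = 2 := by decide
    obtain ⟨hδδ, hδ₂⟩ := hunit δ hδ
    refine betaGen_col_ne_cons_two_zero hn j ?_
    rw [← one_smul (ZMod 4) ((betaGen (n + 1)).col j), ← hδδ, mul_smul, hcol]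
    ext i
    cases i using Fin.cases <;> simp [hδ₂]

lemma covRadLee_dualCode_simplexBeta {k : ℕ} (hk : 2 ≤ k) :
    covRadLee (dualCode (simplexBeta k)) = 2 := by
  obtain ⟨n, rfl⟩ : ∃ n, k = n + 1 := ⟨k - 1, by omega⟩
  rw [simplexBeta_eq_range_vecMul]
  exact le_antisymm
    (covRadLee_dualCode_le _ fun u => exists_leeWeight_le_two_mulVec_betaGen_eq (by omega) _)
    (two_le_covRadLee_dualCode_betaGen (by omega))

end Beta

/-- For `k ≥ 1`, the dual of the type α quaternary simplex code has Lee covering radius `1`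
and Euclidean covering radius at most `4`; for `k ≥ 2`, the dual of the type β quaternary
simplex code has Lee covering radius `2` and Euclidean covering radius at most `4`. -/
theorem stmt17 :
    (∀ k : ℕ, 1 ≤ k →
      covRadLee (dualCode (simplexAlpha k)) = 1 ∧
        covRadEucl (dualCode (simplexAlpha k)) ≤ 4) ∧
    (∀ k : ℕ, 2 ≤ k →
      covRadLee (dualCode (simplexBeta k)) = 2 ∧
        covRadEucl (dualCode (simplexBeta k)) ≤ 4) := by
  refine ⟨fun k hk => ?_, fun k hk => ?_⟩
  · have hLee := covRadLee_dualCode_simplexAlpha hk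
    have hEucl := covRadEucl_le_two_mul_covRadLee (dualCode_nonempty (simplexAlpha k))
    exact ⟨hLee, by omega⟩
  · have hLee := covRadLee_dualCode_simplexBeta hk
    have hEucl := covRadEucl_le_two_mul_covRadLee (dualCode_nonempty (simplexBeta k))
    exact ⟨hLee, by omega⟩
end

section
/- Let 1 ≤ u ≤ k−1 and let M_{k,u}^β be the quaternary MacDonald code of type β. Then for every r with u < r ≤ k: r_L(M_{k,u}^β) ≤ 2^{k−1}(2^k − 1) − 2^{r−1}(2^r − 1) + r_L(M_{r,u}^β), and r_E(M_{k,u}^β) ≤ 2^{2r−1}(4^{k−r+1} − 1)/3 + 4^{r−1}(4^{k−r} − 1) − 3·2^{r−2}(2^{k−r} − 1) + r_E(M_{r,u}^β). -/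
/-- The starting position `(4^k - 4^u)/3 = 4^(k-1) + 4^(k-2) + ⋯ + 4^u` of the block of
columns of `G_k^β` whose first `k - u` entries are `0` and whose last `u` entries form the
columns of `G_u^β` (these are the columns deleted to form the MacDonald code). -/
def offB (k u : ℕ) : ℕ := (4 ^ k - 4 ^ u) / 3

/-- The quaternary MacDonald code of type β, `M_{k,u}^β`: the `ZMod 4`-span of the rows of
the matrix obtained from `G_k^β` by deleting the `lenB u` columns (in positions
`offB k u, …, offB k u + lenB u - 1`) whose first `k - u` entries are `0` and whose last
`u` entries form the columns of `G_u^β`. -/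
def macDonaldBeta (k u : ℕ) :
    Set ({j : Fin (lenB k) // (j : ℕ) < offB k u ∨ offB k u + lenB u ≤ (j : ℕ)} → ZMod 4) :=
  Set.range fun a : Fin k → ZMod 4 =>
    fun j : {j : Fin (lenB k) // (j : ℕ) < offB k u ∨ offB k u + lenB u ≤ (j : ℕ)} =>
      ∑ i : Fin k, a i * gbetaEnt k i j.1

/-!
Write `k = n + 1` with `n ≥ 2`. The columns of `G_{n+1}^β` are a copy of `G_n^α` under first-row
entry `1`, a copy of `G_n^β` under `0` and another copy of `G_n^β` under `2`; the columns deleted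
from `M_{n+1,u}^β` lie in the middle block, where they are those deleted from `M_{n,u}^β`. Given
a word `x`, take a nearest codeword of `M_{n,u}^β` on the middle block and extend it by each of
the four first-row coefficients `a₀`. Summed over `a₀`, a column of the first block contributes
`∑ₐ w (y - a) ≤ S₁` and a column of the last block `∑ₐ w (y - 2a) ≤ S₂`, where `(S₁, S₂)` is
`(4, 4)` for the Lee weight and `(6, 8)` for the Euclidean one. So some extension is within
`r(M_{n,u}^β) + (S₁ 4ⁿ + S₂ lenB n) / 4` of `x`, and summing these increments from `r` to `k`
gives both bounds.
-/

open Finset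

section Covering

variable {R ι : Type*} [Sub R] [Fintype ι]

def wtDist (w : R → ℕ) (x y : ι → R) : ℕ := ∑ i, w (x i - y i)

noncomputable def wtCovRad (w : R → ℕ) (C : Set (ι → R)) : ℕ :=
  sSup (Set.range fun x : ι → R => sInf (wtDist w x '' C))

theorem wtCovRad_le {w : R → ℕ} {C : Set (ι → R)} {ρ : ℕ}
    (h : ∀ x, ∃ c ∈ C, wtDist w x c ≤ ρ) : wtCovRad w C ≤ ρ := by
  refine csSup_le' ?_
  rintro _ ⟨x, rfl⟩
  obtain ⟨c, hc, hxc⟩ := h x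
  exact (Nat.sInf_le (Set.mem_image_of_mem _ hc)).trans hxc

theorem exists_wtDist_le_wtCovRad [Finite R] (w : R → ℕ) {C : Set (ι → R)} (hC : C.Nonempty)
    (x : ι → R) : ∃ c ∈ C, wtDist w x c ≤ wtCovRad w C := by
  obtain ⟨c, hc, hxc⟩ := Nat.sInf_mem (hC.image (wtDist w x))
  exact ⟨c, hc, hxc ▸ le_csSup (Set.finite_range _).bddAbove (Set.mem_range_self x)⟩

theorem wtCovRad_le_wtCovRad_add [Finite R] [DecidableEq ι] {ι' A : Type*} [Fintype ι']
    [Fintype A] [Nonempty A] (w : R → ℕ) {C : Set (ι → R)} {C' : Set (ι' → R)} (hC' : C'.Nonempty)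
    (e : ι' ↪ ι) (B : ℕ)
    (hlift : ∀ c' ∈ C', ∃ c : A → ι → R, (∀ a, c a ∈ C ∧ ∀ j, c a (e j) = c' j) ∧
      ∀ x : ι → R, ∑ a, ∑ j ∈ (univ.map e)ᶜ, w (x j - c a j) ≤ Fintype.card A * B) :
    wtCovRad w C ≤ wtCovRad w C' + B := by
  refine wtCovRad_le fun x => ?_
  obtain ⟨c', hc', hdist⟩ := exists_wtDist_le_wtCovRad w hC' (x ∘ e)
  obtain ⟨c, hc, havg⟩ := hlift c' hc'
  obtain ⟨a, -, ha⟩ := exists_le_of_sum_le univ_nonempty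
    ((havg x).trans_eq (by rw [sum_const, card_univ, smul_eq_mul]) :
      ∑ a, ∑ j ∈ (univ.map e)ᶜ, w (x j - c a j) ≤ ∑ _a : A, B)
  refine ⟨c a, (hc a).1, ?_⟩
  calc wtDist w x (c a)
      = ∑ j, w (x (e j) - c a (e j)) + ∑ j ∈ (univ.map e)ᶜ, w (x j - c a j) := by
        rw [wtDist, ← sum_add_sum_compl (univ.map e), sum_map]
    _ = wtDist w (x ∘ e) c' + ∑ j ∈ (univ.map e)ᶜ, w (x j - c a j) := by
        simp only [(hc a).2, wtDist, Function.comp_apply]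
    _ ≤ wtCovRad w C' + B := add_le_add hdist ha

end Covering

theorem lenB_succ (n : ℕ) : lenB (n + 1) = 4 ^ n + 2 * lenB n := by
  rcases n with _ | n
  · rfl
  · have h4 : (4 : ℤ) ^ (n + 1) = 2 ^ (n + 1) * 2 ^ (n + 1) := by rw [← mul_pow]; norm_num
    simp only [lenB, Nat.add_sub_cancel]
    zify [Nat.one_le_two_pow (n := n + 2), Nat.one_le_two_pow (n := n + 1)]
    rw [h4]
    ring

theorem offB_succ {n u : ℕ} (hu : u ≤ n) : offB (n + 1) u = 4 ^ n + offB n u := by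
  have : 4 ^ u ≤ 4 ^ n := Nat.pow_le_pow_right (by norm_num) hu
  rw [offB, offB, pow_succ]
  omega

theorem cast_lenB (n : ℕ) : (lenB n : ℚ) = (4 ^ n - 2 ^ n) / 2 := by
  rcases n with _ | n
  · simp [lenB]
  · rw [lenB, Nat.add_sub_cancel, Nat.cast_mul, Nat.cast_sub Nat.one_le_two_pow,
      show (4 : ℚ) = 2 ^ 2 by norm_num, ← pow_mul]
    push_cast
    ring

theorem gbetaEnt_succ_zero {n : ℕ} (hn : 2 ≤ n) (j : ℕ) :
    gbetaEnt (n + 1) 0 j = if j < 4 ^ n then 1 else if j < 4 ^ n + lenB n then 0 else 2 := by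
  obtain ⟨m, rfl⟩ := Nat.exists_eq_add_of_le' hn
  rfl

theorem gbetaEnt_succ_succ {n : ℕ} (hn : 2 ≤ n) (i : ℕ) {j : ℕ} (hj₁ : 4 ^ n ≤ j)
    (hj₂ : j < 4 ^ n + lenB n) : gbetaEnt (n + 1) (i + 1) j = gbetaEnt n i (j - 4 ^ n) := by
  obtain ⟨m, rfl⟩ := Nat.exists_eq_add_of_le' hn
  simp only [gbetaEnt, if_neg (Nat.succ_ne_zero i), if_neg hj₁.not_gt]
  exact if_pos hj₂

def betaWord (k : ℕ) (a : Fin k → ZMod 4) (j : ℕ) : ZMod 4 := ∑ i, a i * gbetaEnt k i j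

theorem betaWord_cons {k : ℕ} (a₀ : ZMod 4) (a : Fin k → ZMod 4) (j : ℕ) :
    betaWord (k + 1) (Fin.cons a₀ a) j =
      a₀ * gbetaEnt (k + 1) 0 j + betaWord (k + 1) (Fin.cons 0 a) j := by
  simp only [betaWord, Fin.sum_univ_succ, Fin.cons_zero, Fin.cons_succ, zero_mul, zero_add,
    Fin.val_zero]

theorem betaWord_succ_cons_add {n : ℕ} (hn : 2 ≤ n) (a₀ : ZMod 4) (a : Fin n → ZMod 4) {j : ℕ}
    (hj : j < lenB n) : betaWord (n + 1) (Fin.cons a₀ a) (4 ^ n + j) = betaWord n a j := by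
  rw [betaWord_cons, gbetaEnt_succ_zero hn, if_neg (by omega), if_pos (by omega), mul_zero,
    zero_add, betaWord, Fin.sum_univ_succ, Fin.cons_zero, zero_mul, zero_add]
  refine sum_congr rfl fun i _ => ?_
  rw [Fin.cons_succ, Fin.val_succ, gbetaEnt_succ_succ hn _ (by omega) (by omega),
    Nat.add_sub_cancel_left]

theorem sum_weight_sub_betaWord_cons_le (w : ZMod 4 → ℕ) {S₁ S₂ n : ℕ}
    (h₁ : ∀ y, ∑ a : ZMod 4, w (y - a) ≤ S₁) (h₂ : ∀ y, ∑ a : ZMod 4, w (y - a * 2) ≤ S₂)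
    (hn : 2 ≤ n) (a : Fin n → ZMod 4) (y : ZMod 4) {j : ℕ} (hj : j < 4 ^ n ∨ 4 ^ n + lenB n ≤ j) :
    ∑ a₀, w (y - betaWord (n + 1) (Fin.cons a₀ a) j) ≤ if j < 4 ^ n then S₁ else S₂ := by
  have hsplit : ∀ a₀, y - betaWord (n + 1) (Fin.cons a₀ a) j =
      y - betaWord (n + 1) (Fin.cons 0 a) j - a₀ * gbetaEnt (n + 1) 0 j := fun a₀ => by
    rw [betaWord_cons, sub_add_eq_sub_sub_swap]
  rw [sum_congr rfl fun a₀ _ => congrArg w (hsplit a₀), gbetaEnt_succ_zero hn]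
  split_ifs with h h'
  · simpa only [mul_one] using h₁ _
  · omega
  · exact h₂ _

abbrev MacCoord (k u : ℕ) := {j : Fin (lenB k) // (j : ℕ) < offB k u ∨ offB k u + lenB u ≤ (j : ℕ)}

theorem MacCoord.val_injective (k u : ℕ) : Function.Injective fun j : MacCoord k u => (j.1 : ℕ) :=
  fun _ _ h => Subtype.ext (Fin.ext h)

def macCoordShift {n u : ℕ} (hu : u ≤ n) : MacCoord n u ↪ MacCoord (n + 1) u where
  toFun j := ⟨⟨4 ^ n + j.1, by have := j.1.2; rw [lenB_succ]; omega⟩, by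
    show 4 ^ n + (j.1 : ℕ) < offB (n + 1) u ∨ offB (n + 1) u + lenB u ≤ 4 ^ n + j.1
    have := j.2
    rw [offB_succ hu]
    omega⟩
  inj' j j' h := MacCoord.val_injective n u (Nat.add_left_cancel (congrArg (fun z => (z.1 : ℕ)) h))

theorem mem_range_macCoordShift {n u : ℕ} (hu : u ≤ n) {j : MacCoord (n + 1) u}
    (h₁ : 4 ^ n ≤ (j.1 : ℕ)) (h₂ : (j.1 : ℕ) < 4 ^ n + lenB n) :
    j ∈ Set.range (macCoordShift hu) := by
  have hj := j.2
  have hoff := offB_succ hu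
  refine ⟨⟨⟨j.1 - 4 ^ n, by omega⟩, ?_⟩, MacCoord.val_injective _ _ ?_⟩
  · show (j.1 : ℕ) - 4 ^ n < offB n u ∨ offB n u + lenB u ≤ (j.1 : ℕ) - 4 ^ n
    omega
  · show 4 ^ n + ((j.1 : ℕ) - 4 ^ n) = j.1
    omega

theorem sum_compl_macCoordShift_le {n u : ℕ} (hu : u ≤ n) (f : ℕ → ℕ) :
    ∑ j ∈ (univ.map (macCoordShift hu))ᶜ, f j.1 ≤
      ∑ m ∈ range (4 ^ n), f m + ∑ m ∈ Ico (4 ^ n + lenB n) (lenB (n + 1)), f m := by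
  have hsub : (univ.map (macCoordShift hu))ᶜ.image (fun j => (j.1 : ℕ)) ⊆
      range (4 ^ n) ∪ Ico (4 ^ n + lenB n) (lenB (n + 1)) := by
    intro m hm
    obtain ⟨j, hj, rfl⟩ := mem_image.1 hm
    have hj' : j ∉ Set.range (macCoordShift hu) := by simpa using hj
    have := j.1.2
    simp only [mem_union, mem_range, mem_Ico]
    by_contra! h
    exact hj' (mem_range_macCoordShift hu h.1 (by omega))
  rw [← sum_image (MacCoord.val_injective _ _).injOn,
    ← sum_union (disjoint_left.2 fun m h₁ h₂ => by simp only [mem_range, mem_Ico] at h₁ h₂; omega)]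
  exact sum_le_sum_of_subset hsub

theorem wtCovRad_macDonaldBeta_succ_le (w : ZMod 4 → ℕ) {S₁ S₂ B n u : ℕ}
    (h₁ : ∀ y, ∑ a : ZMod 4, w (y - a) ≤ S₁) (h₂ : ∀ y, ∑ a : ZMod 4, w (y - a * 2) ≤ S₂)
    (hn : 2 ≤ n) (hu : u ≤ n) (hB : S₁ * 4 ^ n + S₂ * lenB n ≤ 4 * B) :
    wtCovRad w (macDonaldBeta (n + 1) u) ≤ wtCovRad w (macDonaldBeta n u) + B := by
  refine wtCovRad_le_wtCovRad_add (A := ZMod 4) w (Set.range_nonempty _) (macCoordShift hu) B ?_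
  rintro _ ⟨a, rfl⟩
  refine ⟨fun a₀ j => betaWord (n + 1) (Fin.cons a₀ a) j.1,
    fun a₀ => ⟨⟨_, rfl⟩, fun j => betaWord_succ_cons_add hn a₀ a j.1.2⟩, fun x => ?_⟩
  have hcol : ∀ j ∈ (univ.map (macCoordShift hu))ᶜ,
      ∑ a₀, w (x j - betaWord (n + 1) (Fin.cons a₀ a) j.1) ≤
        if (j.1 : ℕ) < 4 ^ n then S₁ else S₂ := by
    intro j hj
    have hj' : j ∉ Set.range (macCoordShift hu) := by simpa using hj
    refine sum_weight_sub_betaWord_cons_le w h₁ h₂ hn a _ ?_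
    by_contra! h
    exact hj' (mem_range_macCoordShift hu h.1 h.2)
  have hα : ∑ m ∈ range (4 ^ n), (if m < 4 ^ n then S₁ else S₂) = S₁ * 4 ^ n := by
    rw [sum_congr rfl fun m hm => if_pos (mem_range.1 hm), sum_const, card_range, smul_eq_mul,
      mul_comm]
  have hβ : ∑ m ∈ Ico (4 ^ n + lenB n) (lenB (n + 1)), (if m < 4 ^ n then S₁ else S₂) =
      S₂ * lenB n := by
    rw [sum_congr rfl fun m hm => if_neg (by simp only [mem_Ico] at hm; omega), sum_const,
      Nat.card_Ico, lenB_succ, smul_eq_mul, mul_comm]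
    congr 1
    omega
  calc ∑ a₀, ∑ j ∈ (univ.map (macCoordShift hu))ᶜ, w (x j - betaWord (n + 1) (Fin.cons a₀ a) j.1)
      ≤ ∑ j ∈ (univ.map (macCoordShift hu))ᶜ, if (j.1 : ℕ) < 4 ^ n then S₁ else S₂ := by
        rw [sum_comm]; exact sum_le_sum hcol
    _ ≤ S₁ * 4 ^ n + S₂ * lenB n := by
        rw [← hα, ← hβ]; exact sum_compl_macCoordShift_le hu fun m => if m < 4 ^ n then S₁ else S₂
    _ ≤ Fintype.card (ZMod 4) * B := by rwa [ZMod.card]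

theorem wtCovRad_macDonaldBeta_add_le (w : ZMod 4 → ℕ) {S₁ S₂ : ℕ}
    (h₁ : ∀ y, ∑ a : ZMod 4, w (y - a) ≤ S₁) (h₂ : ∀ y, ∑ a : ZMod 4, w (y - a * 2) ≤ S₂)
    (B : ℕ → ℕ) (hB : ∀ n, 2 ≤ n → S₁ * 4 ^ n + S₂ * lenB n ≤ 4 * B n) {r u : ℕ} (hr : 2 ≤ r)
    (hu : u ≤ r) (d : ℕ) :
    wtCovRad w (macDonaldBeta (r + d) u) ≤
      ∑ t ∈ range d, B (r + t) + wtCovRad w (macDonaldBeta r u) := by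
  induction d with
  | zero => simp
  | succ d ih =>
    calc wtCovRad w (macDonaldBeta (r + d + 1) u)
        ≤ wtCovRad w (macDonaldBeta (r + d) u) + B (r + d) :=
          wtCovRad_macDonaldBeta_succ_le w h₁ h₂ (by omega) (by omega) (hB _ (by omega))
      _ ≤ ∑ t ∈ range (d + 1), B (r + t) + wtCovRad w (macDonaldBeta r u) := by
          rw [sum_range_succ]; omega

theorem leeWt_sum_sub (y : ZMod 4) : ∑ a : ZMod 4, leeWt (y - a) = 4 := by revert y; decide
theorem leeWt_sum_sub_mul_two (y : ZMod 4) : ∑ a : ZMod 4, leeWt (y - a * 2) = 4 := by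
  revert y; decide
theorem euclWt_sum_sub (y : ZMod 4) : ∑ a : ZMod 4, euclWt (y - a) = 6 := by revert y; decide
theorem euclWt_sum_sub_mul_two (y : ZMod 4) : ∑ a : ZMod 4, euclWt (y - a * 2) ≤ 8 := by
  revert y; decide

theorem sum_range_four_pow_add_lenB (r d : ℕ) :
    ∑ t ∈ range d, (4 ^ (r + t) + lenB (r + t)) + lenB r = lenB (r + d) := by
  induction d with
  | zero => simp
  | succ d ih => rw [sum_range_succ, ← add_assoc r d 1, lenB_succ]; omega

def euclStep (n : ℕ) : ℕ := 6 * 4 ^ (n - 1) + 2 * lenB n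

theorem cast_euclStep {n : ℕ} (hn : 1 ≤ n) : (euclStep n : ℚ) = 5 / 2 * 4 ^ n - 2 ^ n := by
  obtain ⟨m, rfl⟩ := Nat.exists_eq_add_of_le' hn
  rw [euclStep]
  push_cast
  rw [cast_lenB]
  ring

theorem sum_range_cast_euclStep {r : ℕ} (hr : 1 ≤ r) (d : ℕ) :
    ∑ t ∈ range d, (euclStep (r + t) : ℚ) = 5 / 6 * 4 ^ r * (4 ^ d - 1) - 2 ^ r * (2 ^ d - 1) := by
  induction d with
  | zero => simp
  | succ d ih => rw [sum_range_succ, ih, cast_euclStep (by omega)]; ring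

theorem sum_range_cast_euclStep_le {r : ℕ} (hr : 2 ≤ r) (d : ℕ) :
    ∑ t ∈ range d, (euclStep (r + t) : ℚ) ≤
      2 ^ (2 * r - 1) * (4 ^ (d + 1) - 1) / 3 + 4 ^ (r - 1) * (4 ^ d - 1)
        - 3 * 2 ^ (r - 2) * (2 ^ d - 1) := by
  rw [sum_range_cast_euclStep (by omega)]
  obtain ⟨s, rfl⟩ := Nat.exists_eq_add_of_le' hr
  have h4 : ∀ m, (4 : ℚ) ^ m = (2 ^ m) ^ 2 := fun m => by
    rw [← pow_mul, mul_comm, pow_mul]; norm_num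
  rw [show 2 * (s + 2) - 1 = 2 * s + 3 by omega, Nat.add_sub_cancel,
    show s + 2 - 1 = s + 1 by omega, h4, h4, h4, h4]
  have hY : (1 : ℚ) ≤ 2 ^ d := one_le_pow₀ (by norm_num)
  have hP : (0 : ℚ) ≤ 2 ^ s := by positivity
  rw [show (2 : ℚ) ^ (2 * s + 3) = 8 * (2 ^ s) ^ 2 by ring, pow_succ _ d, pow_succ _ (s + 1),
    pow_succ _ s]
  generalize (2 : ℚ) ^ s = P at *
  generalize (2 : ℚ) ^ d = Y at *
  -- the right side exceeds the left by `P ^ 2 * (4 * Y ^ 2 + 20) / 3 + P * (Y - 1)`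
  nlinarith [mul_nonneg (mul_nonneg hP hP) (sq_nonneg Y), mul_nonneg hP (sub_nonneg.2 hY),
    mul_nonneg hP hP]

theorem stmt19_general (k u r : ℕ) (hu : 1 ≤ u) (hur : u < r) (hrk : r ≤ k) :
    covRadLee (macDonaldBeta k u) ≤
      2 ^ (k - 1) * (2 ^ k - 1) - 2 ^ (r - 1) * (2 ^ r - 1) + covRadLee (macDonaldBeta r u) ∧
      (covRadEucl (macDonaldBeta k u) : ℚ) ≤
        2 ^ (2 * r - 1) * (4 ^ (k - r + 1) - 1) / 3 + 4 ^ (r - 1) * (4 ^ (k - r) - 1)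
          - 3 * 2 ^ (r - 2) * (2 ^ (k - r) - 1) + covRadEucl (macDonaldBeta r u) := by
  obtain ⟨d, rfl⟩ := Nat.exists_eq_add_of_le hrk
  have hr : 2 ≤ r := by omega
  refine ⟨?_, ?_⟩
  · have hLee := wtCovRad_macDonaldBeta_add_le leeWt (fun y => (leeWt_sum_sub y).le)
      (fun y => (leeWt_sum_sub_mul_two y).le) (fun n => 4 ^ n + lenB n) (fun n _ => by omega)
      hr hur.le d
    refine hLee.trans_eq ?_
    change _ = lenB (r + d) - lenB r + _
    rw [← sum_range_four_pow_add_lenB r d, Nat.add_sub_cancel]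
    rfl
  · have hEucl := wtCovRad_macDonaldBeta_add_le euclWt (fun y => (euclWt_sum_sub y).le)
      euclWt_sum_sub_mul_two euclStep
      (fun n hn => by
        obtain ⟨m, rfl⟩ := Nat.exists_eq_add_of_le' (by omega : 1 ≤ n)
        rw [euclStep, Nat.add_sub_cancel, pow_succ]
        omega)
      hr hur.le d
    have hcast := (Nat.cast_le (α := ℚ)).2 hEucl
    rw [Nat.cast_add, Nat.cast_sum] at hcast
    rw [Nat.add_sub_cancel_left]
    exact hcast.trans (add_le_add (sum_range_cast_euclStep_le hr d) le_rfl)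

/-- Recursive bounds on the covering radii of the type β quaternary MacDonald codes. -/
theorem stmt19 (k u r : ℕ) (hu : 1 ≤ u) (huk : u ≤ k - 1) (hur : u < r) (hrk : r ≤ k) :
    covRadLee (macDonaldBeta k u) ≤
      2 ^ (k - 1) * (2 ^ k - 1) - 2 ^ (r - 1) * (2 ^ r - 1) + covRadLee (macDonaldBeta r u) ∧
      (covRadEucl (macDonaldBeta k u) : ℚ) ≤
        2 ^ (2 * r - 1) * (4 ^ (k - r + 1) - 1) / 3 + 4 ^ (r - 1) * (4 ^ (k - r) - 1)
          - 3 * 2 ^ (r - 2) * (2 ^ (k - r) - 1) + covRadEucl (macDonaldBeta r u) :=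
  stmt19_general k u r hu hur hrk
end
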